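/- Let n be a positive integer and let H = {0,...,n/2−1} if n is even, H = {0,...,n−1} if n is odd. If h ∈ H satisfies {h − ∑_{p|d} n/p}_n < n − n/γ(n) for every divisor d of γ(n), then ∑_{d | n} μ(d) c_n(h + n/γ(n) − ∑_{p|d} n/p) = 0. -/

import Mathlib

/-!
With `ζ = e^{2πi/n}` and `a = h + n/γ(n)`, expanding `c_n` and summing over `d` first turns the
left side into `∑_j ζ^{ja} ∏_{p ∣ n} (1 - ζ^{-jn/p})` over `1 ≤ j ≤ n` coprime to `n`. The product
vanishes as soon as some `p ∣ n` divides `j`, so the coprimality condition can be dropped; then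
summing over `j` first leaves, for each squarefree `d ∣ n`, the full geometric sum
`∑_{j < n} ζ^{j(a - ∑_{p ∣ d} n/p)}`, which is zero because the residue condition on `h` rules out
`n ∣ a - ∑_{p ∣ d} n/p`.
-/

open Polynomial Finset

/-- The Ramanujan sum `c_n(r) = ∑_{1 ≤ j ≤ n, gcd(j,n)=1} e^{2πijr/n}`. -/
noncomputable def ramanujanSum (n : ℕ) (r : ℤ) : ℂ :=
  ∑ j ∈ Finset.Icc 1 n, if Nat.gcd j n = 1 then
    Complex.exp (2 * (Real.pi : ℂ) * Complex.I * (j : ℂ) * (r : ℂ) / (n : ℂ)) else 0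

open ArithmeticFunction UniqueFactorizationMonoid
open scoped ArithmeticFunction.Moebius

theorem zpow_sum₀ {ι K : Type*} [CommGroupWithZero K] {ζ : K} (hζ : ζ ≠ 0) (s : Finset ι)
    (f : ι → ℤ) : ζ ^ (∑ i ∈ s, f i) = ∏ i ∈ s, ζ ^ f i := by
  induction s using Finset.cons_induction with
  | empty => simp
  | cons i s hi ih => rw [sum_cons, prod_cons, zpow_add₀ hζ, ih]

theorem Finset.sum_Icc_one_eq_sum_range {M : Type*} [AddCommMonoid M] {f : ℕ → M} {n : ℕ}
    (hf : f n = f 0) : ∑ j ∈ Icc 1 n, f j = ∑ j ∈ range n, f j := by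
  rw [← Ico_add_one_right_eq_Icc, sum_Ico_eq_sum_range, Nat.add_sub_cancel]
  simp only [add_comm 1]
  cases n with
  | zero => simp
  | succ k => rw [sum_range_succ, sum_range_succ', hf]

theorem IsPrimitiveRoot.sum_range_zpow_mul_eq_zero {K : Type*} [Field K] {ζ : K} {n : ℕ}
    (hζ : IsPrimitiveRoot ζ n) {r : ℤ} (hr : ¬ (n : ℤ) ∣ r) :
    ∑ j ∈ range n, ζ ^ ((j : ℤ) * r) = 0 := by
  have hne : ζ ^ r ≠ 1 := fun h => hr ((hζ.zpow_eq_one_iff_dvd r).1 h)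
  have hpow : (ζ ^ r) ^ n = 1 := by
    rw [← zpow_natCast, ← zpow_mul, hζ.zpow_eq_one_iff_dvd]
    exact dvd_mul_left _ _
  simp_rw [mul_comm _ r, zpow_mul, zpow_natCast]
  rw [geom_sum_eq hne, hpow, sub_self, zero_div]

namespace ArithmeticFunction

theorem sum_divisors_moebius_mul_eq_sum_divisors_radical {R : Type*} [NonAssocRing R] {n : ℕ}
    (hn : n ≠ 0) (f : ℕ → R) :
    ∑ d ∈ n.divisors, (μ d : R) * f d = ∑ d ∈ (radical n).divisors, (μ d : R) * f d := by
  refine (sum_subset (Nat.divisors_subset_of_dvd hn radical_dvd_self) fun d hd hdrad => ?_).symm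
  rw [moebius_eq_zero_of_not_squarefree fun hsq => hdrad ?_, Int.cast_zero, zero_mul]
  exact Nat.mem_divisors.2
    ⟨(dvd_radical_iff hsq.isRadical hn).2 (Nat.dvd_of_mem_divisors hd), radical_ne_zero⟩

theorem sum_divisors_moebius_mul_prod_primeFactors {R : Type*} [CommRing R] {n : ℕ} (hn : n ≠ 0)
    (f : ℕ → R) :
    ∑ d ∈ n.divisors, (μ d : R) * ∏ p ∈ d.primeFactors, f p =
      ∏ p ∈ n.primeFactors, (1 - f p) := by
  calc ∑ d ∈ n.divisors, (μ d : R) * ∏ p ∈ d.primeFactors, f p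
      = ∑ d ∈ (radical n).divisors, (μ d : R) * prodPrimeFactors f d := by
        rw [sum_divisors_moebius_mul_eq_sum_divisors_radical hn]
        exact sum_congr rfl fun d hd => by
          rw [prodPrimeFactors_apply (Nat.pos_of_mem_divisors hd).ne']
    _ = ∏ p ∈ (radical n).primeFactors, (1 - prodPrimeFactors f p) :=
        ((IsMultiplicative.prodPrimeFactors f).prodPrimeFactors_one_sub_of_squarefree _
          squarefree_radical).symm
    _ = ∏ p ∈ n.primeFactors, (1 - f p) := by
        rw [Nat.primeFactors_radical]
        refine prod_congr rfl fun p hp => ?_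
        have hp := Nat.prime_of_mem_primeFactors hp
        rw [prodPrimeFactors_apply hp.ne_zero, hp.primeFactors, prod_singleton]

end ArithmeticFunction

def cofactorSum (n d : ℕ) : ℤ := ∑ p ∈ d.primeFactors, ((n / p : ℕ) : ℤ)

theorem zpow_mul_sub_cofactorSum {K : Type*} [CommGroupWithZero K] {ζ : K} (hζ : ζ ≠ 0)
    (n : ℕ) (j a : ℤ) (d : ℕ) :
    ζ ^ (j * (a - cofactorSum n d)) =
      ζ ^ (j * a) * ∏ p ∈ d.primeFactors, ζ ^ (-j * (n / p : ℕ)) := by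
  rw [← zpow_sum₀ hζ, ← zpow_add₀ hζ, cofactorSum, mul_sub, mul_sum, sub_eq_add_neg,
    ← sum_neg_distrib]
  simp only [neg_mul]

namespace IsPrimitiveRoot

variable {K : Type*} [Field K] {ζ : K} {n : ℕ}

theorem sum_divisors_moebius_mul_zpow_eq_zero_of_gcd_ne_one (hζ : IsPrimitiveRoot ζ n) (a : ℤ)
    {j : ℕ} (hj : j.gcd n ≠ 1) :
    ∑ d ∈ n.divisors, (μ d : K) * ζ ^ ((j : ℤ) * (a - cofactorSum n d)) = 0 := by
  rcases eq_or_ne n 0 with rfl | hn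
  · simp
  obtain ⟨p, hp, hpj⟩ := Nat.exists_prime_and_dvd hj
  have hpn : p ∣ n := hpj.trans (Nat.gcd_dvd_right _ _)
  have hζp : ζ ^ (-(j : ℤ) * (n / p : ℕ)) = 1 := by
    rw [hζ.zpow_eq_one_iff_dvd, neg_mul, dvd_neg]
    have : n ∣ j * (n / p) := by
      simpa only [Nat.mul_div_cancel' hpn] using
        Nat.mul_dvd_mul_right (hpj.trans (Nat.gcd_dvd_left _ _)) (n / p)
    exact_mod_cast this
  simp_rw [zpow_mul_sub_cofactorSum (hζ.ne_zero hn), mul_left_comm _ (ζ ^ ((j : ℤ) * a)),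
    ← mul_sum]
  rw [sum_divisors_moebius_mul_prod_primeFactors hn,
    prod_eq_zero (Nat.mem_primeFactors.2 ⟨hp, hpn, hn⟩) (by rw [hζp, sub_self]), mul_zero]

theorem sum_divisors_moebius_mul_sum_coprime_zpow_eq_zero (hζ : IsPrimitiveRoot ζ n) (a : ℤ)
    (ha : ∀ d ∈ (radical n).divisors, ¬ (n : ℤ) ∣ a - cofactorSum n d) :
    ∑ d ∈ n.divisors, (μ d : K) * ∑ j ∈ Icc 1 n,
      (if j.gcd n = 1 then ζ ^ ((j : ℤ) * (a - cofactorSum n d)) else 0) = 0 := by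
  rcases eq_or_ne n 0 with rfl | hn
  · simp
  set S : ℕ → K := fun j => ∑ d ∈ n.divisors, (μ d : K) * ζ ^ ((j : ℤ) * (a - cofactorSum n d))
  have hS : S n = S 0 := by
    simp only [S, zpow_mul, zpow_natCast, hζ.pow_eq_one, pow_zero, one_zpow]
  calc _ = ∑ j ∈ Icc 1 n, if j.gcd n = 1 then S j else 0 := by
        simp_rw [S, mul_sum, mul_ite, mul_zero]
        rw [sum_comm]
        simp_rw [sum_ite_irrel, sum_const_zero]
    _ = ∑ j ∈ Icc 1 n, S j := sum_congr rfl fun j _ => ite_eq_left_iff.2 fun hj =>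
        (hζ.sum_divisors_moebius_mul_zpow_eq_zero_of_gcd_ne_one a hj).symm
    _ = ∑ j ∈ range n, S j := sum_Icc_one_eq_sum_range hS
    _ = ∑ d ∈ (radical n).divisors,
          (μ d : K) * ∑ j ∈ range n, ζ ^ ((j : ℤ) * (a - cofactorSum n d)) := by
        rw [sum_comm]
        simp_rw [← mul_sum]
        exact sum_divisors_moebius_mul_eq_sum_divisors_radical hn _
    _ = 0 := sum_eq_zero fun d hd => by rw [hζ.sum_range_zpow_mul_eq_zero (ha d hd), mul_zero]

end IsPrimitiveRoot

theorem ramanujanSum_eq_sum_zpow (n : ℕ) (r : ℤ) :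
    ramanujanSum n r = ∑ j ∈ Icc 1 n,
      if j.gcd n = 1 then Complex.exp (2 * Real.pi * Complex.I / n) ^ ((j : ℤ) * r) else 0 := by
  refine sum_congr rfl fun j _ => ?_
  rw [← Complex.exp_int_mul]
  congr 2
  push_cast
  ring

theorem Int.not_dvd_add_of_emod_toNat_lt {x : ℤ} {n m : ℕ} (hm : 0 < m) (hmn : m ≤ n)
    (hx : (x % n).toNat < n - m) : ¬ (n : ℤ) ∣ x + m := by
  rintro ⟨k, hk⟩
  have : x % n = n - m := by
    rw [show x = (n - m) + n * (k - 1) by linarith, Int.add_mul_emod_self_left,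
      Int.emod_eq_of_lt (by omega) (by omega)]
  omega

theorem ramanujan_sum_vanishing (n : ℕ) (h : ℕ)
    (hres : ∀ d ∈ (∏ p ∈ n.primeFactors, p).divisors,
      (((h : ℤ) - ∑ p ∈ d.primeFactors, ((n / p : ℕ) : ℤ)) % (n : ℤ)).toNat <
        n - n / (∏ p ∈ n.primeFactors, p)) :
    ∑ d ∈ n.divisors, (ArithmeticFunction.moebius d : ℂ) *
        ramanujanSum n
          ((h : ℤ) + ((n / (∏ p ∈ n.primeFactors, p) : ℕ) : ℤ) -
            ∑ p ∈ d.primeFactors, ((n / p : ℕ) : ℤ)) = 0 := by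
  simp only [← Nat.radical_eq_prod_primeFactors] at hres ⊢
  have hn : n ≠ 0 := by
    rintro rfl
    simpa using hres 1 (Nat.one_mem_divisors.2 radical_ne_zero)
  have hm : 0 < n / radical n := Nat.div_pos (Nat.radical_le_self_iff.2 hn) (Nat.radical_pos n)
  simp_rw [ramanujanSum_eq_sum_zpow]
  refine (Complex.isPrimitiveRoot_exp n hn).sum_divisors_moebius_mul_sum_coprime_zpow_eq_zero _
    fun d hd => ?_
  rw [add_sub_right_comm]
  exact Int.not_dvd_add_of_emod_toNat_lt hm (Nat.div_le_self _ _) (hres d hd)
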